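/- arXiv:2601.06609 — 3 statements merged into one kernel-verified Lean document; each statement's English description precedes it below -/
import Mathlib

section
/- Let C be an E-linear code of length 2n. Then the two-sided symplectic dual satisfies (C^{⊥_S})_Res = (C_Tor)^{⊥_S} and (C^{⊥_S})_Tor = (C_Res)^{⊥_S}; equivalently, C^{⊥_S} = κ·(C_Tor)^{⊥_S} ⊕ ζ·(C_Res)^{⊥_S}. -/
open Finset

/-- The non-unital ring `E`, realized as pairs `(u, v) ∈ F₂ × F₂`
representing `uκ + vζ`. -/
def Ering : Type := (ZMod 2) × (ZMod 2)

namespace Ering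

instance : AddCommGroup Ering := inferInstanceAs (AddCommGroup ((ZMod 2) × (ZMod 2)))
instance : DecidableEq Ering := inferInstanceAs (DecidableEq ((ZMod 2) × (ZMod 2)))
instance : Fintype Ering := inferInstanceAs (Fintype ((ZMod 2) × (ZMod 2)))

instance : Mul Ering := ⟨fun a b => (a.1 * b.1, a.2 * b.1)⟩

instance : NonUnitalRing Ering :=
  { (inferInstance : AddCommGroup Ering), (inferInstance : Mul Ering) with
    left_distrib := by decide
    right_distrib := by decide
    zero_mul := by decide
    mul_zero := by decide
    mul_assoc := by decide }

/-- The generator κ. -/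
def kappa : Ering := ((1 : ZMod 2), (0 : ZMod 2))
/-- The generator τ. -/
def tau : Ering := ((1 : ZMod 2), (1 : ZMod 2))
/-- ζ = κ + τ. -/
def zeta : Ering := ((0 : ZMod 2), (1 : ZMod 2))

/-- The scalar action of `F₂` on `E`: `u • e = e` if `u = 1`, else `0`. -/
def fsmul (u : ZMod 2) (e : Ering) : Ering := if u = 1 then e else 0

/-- `E`-vectors of length `2n`, written as a pair `(u | v)` of halves of length `n`. -/
abbrev VE (n : ℕ) := (Fin n → Ering) × (Fin n → Ering)

/-- `F₂`-vectors of length `2n`, written as a pair of halves of length `n`. -/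
abbrev VF (n : ℕ) := (Fin n → ZMod 2) × (Fin n → ZMod 2)

/-- Symplectic inner product on `E^{2n}`: `⟨(u|v),(u'|v')⟩ₛ = ⟨u,v'⟩ + ⟨v,u'⟩`. -/
def sympE {n : ℕ} (x y : VE n) : Ering := ∑ i, x.1 i * y.2 i + ∑ i, x.2 i * y.1 i

/-- Symplectic inner product on `F₂^{2n}`. -/
def sympF {n : ℕ} (x y : VF n) : ZMod 2 := ∑ i, x.1 i * y.2 i + ∑ i, x.2 i * y.1 i

/-- An `E`-linear code: a left `E`-submodule of `E^{2n}`. -/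
def IsLinearCode {n : ℕ} (C : Set (VE n)) : Prop :=
  (0 : VE n) ∈ C ∧ (∀ x ∈ C, ∀ y ∈ C, x + y ∈ C) ∧
    (∀ e : Ering, ∀ x ∈ C, ((fun i => e * x.1 i, fun i => e * x.2 i) : VE n) ∈ C)

/-- Componentwise reduction `π : E^{2n} → F₂^{2n}`, `π(uκ + vζ) = u`. -/
def resVec {n : ℕ} (x : VE n) : VF n := (fun i => (x.1 i).1, fun i => (x.2 i).1)

/-- For `e ∈ E` and `v ∈ F₂^{2n}`, the vector `ev ∈ E^{2n}` with entries `vᵢ • e`. -/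
def evec {n : ℕ} (e : Ering) (v : VF n) : VE n :=
  (fun i => fsmul (v.1 i) e, fun i => fsmul (v.2 i) e)

/-- The residue code `C_Res = π(C)`. -/
def resCode {n : ℕ} (C : Set (VE n)) : Set (VF n) := resVec '' C

/-- The torsion code `C_Tor = {v : ζv ∈ C}`. -/
def torCode {n : ℕ} (C : Set (VE n)) : Set (VF n) := {v | evec zeta v ∈ C}

/-- The left symplectic dual. -/
def leftDual {n : ℕ} (C : Set (VE n)) : Set (VE n) := {z | ∀ w ∈ C, sympE z w = 0}

/-- The right symplectic dual. -/
def rightDual {n : ℕ} (C : Set (VE n)) : Set (VE n) := {z | ∀ w ∈ C, sympE w z = 0}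

/-- The two-sided symplectic dual. -/
def dual {n : ℕ} (C : Set (VE n)) : Set (VE n) := leftDual C ∩ rightDual C

/-- The binary symplectic dual of `D ⊆ F₂^{2n}`. -/
def dualF {n : ℕ} (D : Set (VF n)) : Set (VF n) := {z | ∀ w ∈ D, sympF z w = 0}

/-- The two-sided symplectic hull. -/
def SHull {n : ℕ} (C : Set (VE n)) : Set (VE n) := C ∩ dual C

/-- The left symplectic hull. -/
def LSHull {n : ℕ} (C : Set (VE n)) : Set (VE n) := C ∩ leftDual C

/-- The right symplectic hull. -/
def RSHull {n : ℕ} (C : Set (VE n)) : Set (VE n) := C ∩ rightDual C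

/-- Symplectic hull of a binary code. -/
def SHullF {n : ℕ} (D : Set (VF n)) : Set (VF n) := D ∩ dualF D

/-- A free `E`-linear code: residue and torsion codes coincide. -/
def IsFree {n : ℕ} (C : Set (VE n)) : Prop := resCode C = torCode C

end Ering

open Ering

namespace EringAux

/-- the "torsion part" of an `E`-vector. -/
def tVec {n : ℕ} (x : VE n) : VF n := (fun i => (x.1 i).2, fun i => (x.2 i).2)

/-- projection homs -/
def fstHom : Ering →+ ZMod 2 :=
  { toFun := fun e => e.1, map_zero' := rfl, map_add' := fun _ _ => rfl }
def sndHom : Ering →+ ZMod 2 :=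
  { toFun := fun e => e.2, map_zero' := rfl, map_add' := fun _ _ => rfl }

lemma l1 : ∀ e : Ering, fsmul e.1 zeta = zeta * e := by decide
lemma l2 : ∀ e : Ering, fsmul e.2 zeta = e + kappa * e := by decide
lemma l3 : ∀ u : ZMod 2, (fsmul u zeta).1 = 0 := by decide
lemma l4 : ∀ u : ZMod 2, (fsmul u zeta).2 = u := by decide
lemma l5 : ∀ u : ZMod 2, (fsmul u kappa).1 = u := by decide
lemma l6 : ∀ u : ZMod 2, (fsmul u kappa).2 = 0 := by decide
lemma l7 : ∀ e : Ering, fsmul e.1 kappa + fsmul e.2 zeta = e := by decide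
lemma l8 : ∀ u v : ZMod 2, (fsmul u kappa + fsmul v zeta).1 = u := by decide
lemma l9 : ∀ u v : ZMod 2, (fsmul u kappa + fsmul v zeta).2 = v := by decide

lemma sympE_fst {n : ℕ} (z w : VE n) :
    (sympE z w).1 = sympF (resVec z) (resVec w) := by
  have hs : ∀ (f : Fin n → Ering), (∑ i, f i).1 = ∑ i, (f i).1 :=
    fun f => map_sum fstHom f Finset.univ
  show fstHom (sympE z w) = _
  rw [sympE, map_add]
  show (∑ i, z.1 i * w.2 i).1 + (∑ i, z.2 i * w.1 i).1 = _
  rw [hs, hs]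
  rfl

lemma sympE_snd {n : ℕ} (z w : VE n) :
    (sympE z w).2 = sympF (tVec z) (resVec w) := by
  have hs : ∀ (f : Fin n → Ering), (∑ i, f i).2 = ∑ i, (f i).2 :=
    fun f => map_sum sndHom f Finset.univ
  show sndHom (sympE z w) = _
  rw [sympE, map_add]
  show (∑ i, z.1 i * w.2 i).2 + (∑ i, z.2 i * w.1 i).2 = _
  rw [hs, hs]
  rfl

lemma sympF_comm {n : ℕ} (x y : VF n) : sympF x y = sympF y x := by
  rw [sympF, sympF, add_comm]
  congr 1 <;> exact Finset.sum_congr rfl (fun i _ => mul_comm _ _)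

lemma sympF_zero_left {n : ℕ} (w : VF n) : sympF (0 : VF n) w = 0 := by
  simp [sympF]

lemma zero_mem_dualF {n : ℕ} (D : Set (VF n)) : (0 : VF n) ∈ dualF D :=
  fun w _ => sympF_zero_left w

lemma resVec_evec_zeta {n : ℕ} (v : VF n) : resVec (evec zeta v) = 0 := by
  refine Prod.ext ?_ ?_ <;> funext i <;> exact l3 _

lemma tVec_evec_zeta {n : ℕ} (v : VF n) : tVec (evec zeta v) = v := by
  refine Prod.ext ?_ ?_ <;> funext i <;> exact l4 _

lemma resVec_evec_kappa {n : ℕ} (a : VF n) : resVec (evec kappa a) = a := by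
  refine Prod.ext ?_ ?_ <;> funext i <;> exact l5 _

lemma tVec_evec_kappa {n : ℕ} (a : VF n) : tVec (evec kappa a) = 0 := by
  refine Prod.ext ?_ ?_ <;> funext i <;> exact l6 _

lemma decomp {n : ℕ} (x : VE n) : x = evec kappa (resVec x) + evec zeta (tVec x) := by
  refine Prod.ext ?_ ?_ <;> funext i <;> exact (l7 _).symm

lemma resVec_comb {n : ℕ} (a b : VF n) :
    resVec (evec kappa a + evec zeta b) = a := by
  refine Prod.ext ?_ ?_ <;> funext i <;> exact l8 _ _

lemma tVec_comb {n : ℕ} (a b : VF n) :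
    tVec (evec kappa a + evec zeta b) = b := by
  refine Prod.ext ?_ ?_ <;> funext i <;> exact l9 _ _

lemma resVec_mem_tor {n : ℕ} {C : Set (VE n)} (hC : IsLinearCode C)
    {w : VE n} (hw : w ∈ C) : resVec w ∈ torCode C := by
  have : evec zeta (resVec w) =
      ((fun i => zeta * w.1 i, fun i => zeta * w.2 i) : VE n) := by
    refine Prod.ext ?_ ?_ <;> funext i <;> exact l1 _
  show evec zeta (resVec w) ∈ C
  rw [this]
  exact hC.2.2 zeta w hw

lemma tVec_mem_tor {n : ℕ} {C : Set (VE n)} (hC : IsLinearCode C)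
    {w : VE n} (hw : w ∈ C) : tVec w ∈ torCode C := by
  have : evec zeta (tVec w) =
      w + ((fun i => kappa * w.1 i, fun i => kappa * w.2 i) : VE n) := by
    refine Prod.ext ?_ ?_ <;> funext i <;> exact l2 _
  show evec zeta (tVec w) ∈ C
  rw [this]
  exact hC.2.1 w hw _ (hC.2.2 kappa w hw)

lemma mem_dual_iff {n : ℕ} {C : Set (VE n)} (hC : IsLinearCode C) (z : VE n) :
    z ∈ dual C ↔ resVec z ∈ dualF (torCode C) ∧ tVec z ∈ dualF (resCode C) := by
  constructor
  · rintro ⟨hL, hR⟩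
    constructor
    · intro v hv
      have hw : evec zeta v ∈ C := hv
      have h0 := hR _ hw
      have h2 : (sympE (evec zeta v) z).2 = 0 := by rw [h0]; rfl
      rw [sympE_snd, tVec_evec_zeta] at h2
      rw [sympF_comm]; exact h2
    · rintro _ ⟨w, hw, rfl⟩
      have h0 := hL w hw
      have h2 : (sympE z w).2 = 0 := by rw [h0]; rfl
      rw [sympE_snd] at h2; exact h2
  · rintro ⟨h1, h2⟩
    constructor
    · intro w hw
      have e1 : (sympE z w).1 = 0 := by
        rw [sympE_fst]; exact h1 _ (resVec_mem_tor hC hw)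
      have e2 : (sympE z w).2 = 0 := by
        rw [sympE_snd]; exact h2 _ ⟨w, hw, rfl⟩
      exact Prod.ext e1 e2
    · intro w hw
      have e1 : (sympE w z).1 = 0 := by
        rw [sympE_fst, sympF_comm]; exact h1 _ (resVec_mem_tor hC hw)
      have e2 : (sympE w z).2 = 0 := by
        rw [sympE_snd, sympF_comm]; exact h1 _ (tVec_mem_tor hC hw)
      exact Prod.ext e1 e2

end EringAux

open EringAux

/-- `(C^{⊥_S})_Res = (C_Tor)^{⊥_S}` and `(C^{⊥_S})_Tor = (C_Res)^{⊥_S}`;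
equivalently `C^{⊥_S} = κ(C_Tor)^{⊥_S} ⊕ ζ(C_Res)^{⊥_S}`. -/
theorem Ering.dual_res_tor {n : ℕ} (C : Set (VE n)) (hC : IsLinearCode C) :
    resCode (dual C) = dualF (torCode C) ∧
    torCode (dual C) = dualF (resCode C) ∧
    dual C = {x : VE n | ∃ a ∈ dualF (torCode C), ∃ b ∈ dualF (resCode C),
      x = evec kappa a + evec zeta b} := by
  refine ⟨?_, ?_, ?_⟩
  · ext a
    constructor
    · rintro ⟨z, hz, rfl⟩
      exact ((mem_dual_iff hC z).1 hz).1
    · intro ha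
      refine ⟨evec kappa a, (mem_dual_iff hC _).2 ⟨?_, ?_⟩, resVec_evec_kappa a⟩
      · rw [resVec_evec_kappa]; exact ha
      · rw [tVec_evec_kappa]; exact zero_mem_dualF _
  · ext v
    constructor
    · intro hv
      have := ((mem_dual_iff hC _).1 hv).2
      rwa [tVec_evec_zeta] at this
    · intro hv
      show evec zeta v ∈ dual C
      refine (mem_dual_iff hC _).2 ⟨?_, ?_⟩
      · rw [resVec_evec_zeta]; exact zero_mem_dualF _
      · rw [tVec_evec_zeta]; exact hv
  · ext x
    constructor
    · intro hx
      obtain ⟨h1, h2⟩ := (mem_dual_iff hC x).1 hx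
      exact ⟨resVec x, h1, tVec x, h2, decomp x⟩
    · rintro ⟨a, ha, b, hb, rfl⟩
      refine (mem_dual_iff hC _).2 ⟨?_, ?_⟩
      · rw [resVec_comb]; exact ha
      · rw [tVec_comb]; exact hb
end

section
/- Let C be an E-linear code. Then the left symplectic hull LSHull(C) = C ∩ C^{⊥_{S_L}} satisfies (LSHull(C))_Res = C_Res ∩ (C_Res)^{⊥_S} and (LSHull(C))_Tor = (C_Res)^{⊥_S} ∩ C_Tor. -/
open Finset

/-!
Write `z ∈ E^{2n}` as `z = κ a + ζ b` with `a = π z`. Since `xζ = 0` for every `x ∈ E`,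
`⟨z, w⟩ₛ = κ ⟨a, π w⟩ + ζ ⟨b, π w⟩`, so `z ∈ C^{⊥_{S_L}}` exactly when both `a` and `b`
lie in `(C_Res)^{⊥_S}`. A vector `ζ v` has `a = 0` and `b = v`, which gives the torsion part;
for the residue part, `κ x` is a codeword with the same residue as `x` and with `b = 0`.
-/

namespace Ering

variable {n : ℕ}

def zetaCoeff (x : VE n) : VF n := (fun i => (x.1 i).2, fun i => (x.2 i).2)

theorem sympE_eq (x y : VE n) :
    sympE x y = ((sympF (resVec x) (resVec y), sympF (zetaCoeff x) (resVec y)) :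
      ZMod 2 × ZMod 2) :=
  Prod.ext (congrArg₂ (· + ·) (Prod.fst_sum ..) (Prod.fst_sum ..))
    (congrArg₂ (· + ·) (Prod.snd_sum ..) (Prod.snd_sum ..))

theorem sympE_eq_zero_iff (x y : VE n) :
    sympE x y = 0 ↔
      sympF (resVec x) (resVec y) = 0 ∧ sympF (zetaCoeff x) (resVec y) = 0 := by
  rw [sympE_eq]
  exact Prod.mk_eq_zero

theorem mem_leftDual_iff (C : Set (VE n)) (z : VE n) :
    z ∈ leftDual C ↔ resVec z ∈ dualF (resCode C) ∧ zetaCoeff z ∈ dualF (resCode C) := by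
  simp only [leftDual, dualF, resCode, Set.mem_ofPred_eq, Set.forall_mem_image,
    sympE_eq_zero_iff, forall_and]

theorem zero_mem_dualF (D : Set (VF n)) : 0 ∈ dualF D := fun _ _ => by
  simp [sympF]

theorem fsmul_fst (u : ZMod 2) (e : Ering) : (fsmul u e).1 = u * e.1 := by
  revert u e; decide

theorem fsmul_snd (u : ZMod 2) (e : Ering) : (fsmul u e).2 = u * e.2 := by
  revert u e; decide

theorem resVec_evec (e : Ering) (v : VF n) : resVec (evec e v) = e.1 • v := by
  ext i <;> exact (fsmul_fst _ _).trans (mul_comm _ _)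

theorem zetaCoeff_evec (e : Ering) (v : VF n) : zetaCoeff (evec e v) = e.2 • v := by
  ext i <;> exact (fsmul_snd _ _).trans (mul_comm _ _)

theorem kappa_mul (e : Ering) : kappa * e = fsmul e.1 kappa := by
  revert e; decide

theorem IsLinearCode.evec_kappa_resVec_mem {C : Set (VE n)} (hC : IsLinearCode C)
    {x : VE n} (hx : x ∈ C) : evec kappa (resVec x) ∈ C := by
  have hκx : ((fun i => kappa * x.1 i, fun i => kappa * x.2 i) : VE n) = evec kappa (resVec x) :=
    Prod.ext (funext fun _ => kappa_mul _) (funext fun _ => kappa_mul _)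
  exact hκx ▸ hC.2.2 kappa x hx

theorem resCode_LSHull {C : Set (VE n)} (hC : IsLinearCode C) :
    resCode (LSHull C) = resCode C ∩ dualF (resCode C) := by
  ext v
  constructor
  · rintro ⟨x, ⟨hxC, hxD⟩, rfl⟩
    exact ⟨⟨x, hxC, rfl⟩, ((mem_leftDual_iff C x).1 hxD).1⟩
  · rintro ⟨⟨x, hxC, rfl⟩, hdual⟩
    have hres : resVec (evec kappa (resVec x)) = resVec x :=
      (resVec_evec _ _).trans (one_smul _ _)
    have hzeta : zetaCoeff (evec kappa (resVec x)) = 0 :=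
      (zetaCoeff_evec _ _).trans (zero_smul _ _)
    refine ⟨evec kappa (resVec x), ⟨hC.evec_kappa_resVec_mem hxC, ?_⟩, hres⟩
    rw [mem_leftDual_iff, hres, hzeta]
    exact ⟨hdual, zero_mem_dualF _⟩

theorem torCode_LSHull (C : Set (VE n)) :
    torCode (LSHull C) = dualF (resCode C) ∩ torCode C := by
  have hres (v : VF n) : resVec (evec zeta v) = 0 := (resVec_evec _ _).trans (zero_smul _ _)
  have hzeta (v : VF n) : zetaCoeff (evec zeta v) = v := (zetaCoeff_evec _ _).trans (one_smul _ _)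
  ext v
  simp only [torCode, LSHull, Set.mem_inter_iff, Set.mem_ofPred_eq, mem_leftDual_iff, hres,
    hzeta, zero_mem_dualF, true_and, and_comm]

end Ering

open Ering
/-- `(LSHull C)_Res = C_Res ∩ (C_Res)^{⊥_S}` and
`(LSHull C)_Tor = (C_Res)^{⊥_S} ∩ C_Tor`. -/
theorem Ering.lshull_res_tor {n : ℕ} (C : Set (VE n)) (hC : IsLinearCode C) :
    resCode (LSHull C) = resCode C ∩ dualF (resCode C) ∧
    torCode (LSHull C) = dualF (resCode C) ∩ torCode C :=
  ⟨resCode_LSHull hC, torCode_LSHull C⟩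
end

section
/- Every E-linear code C of length 2n is two-sided symplectic nice: |C| · |C^{⊥_S}| = |E|^{2n} = 4^{2n}. -/
open Finset

/-! Writing each entry of `E` as `aκ + bζ` (`a, b ∈ F₂`) and taking `a` (this is `π = resVec`)
and `b` (`σ = sigVec`) entrywise identifies `E^{2n}` with `F₂^{2n} × F₂^{2n}`. Since
`(aκ + bζ)(a'κ + b'ζ) = aa'κ + ba'ζ`, the two coordinates of `⟨z, w⟩ₛ` are `⟨π z, π w⟩ₛ` and
`⟨σ z, π w⟩ₛ`. For `w ∈ C` both `π w` and `σ w` lie in `C_Tor` (because `ζw` and `w + κw` lie in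
`C`), so `z ↦ (π z, σ z)` maps `C^{⊥_S}` bijectively onto `C_Tor^{⊥_S} × C_Res^{⊥_S}`. On `C`, `π`
maps onto `C_Res` with kernel `ζ C_Tor`, so `|C| = |C_Res| |C_Tor|`. Regrouping,
`|C| |C^{⊥_S}| = (|C_Res| |C_Res^{⊥_S}|) (|C_Tor| |C_Tor^{⊥_S}|)`, and each factor is `2^{2n}`
since the binary symplectic form is nondegenerate. -/

namespace LinearMap.BilinForm

theorem card_mul_card_orthogonal {K V : Type*} [Field K] [Finite K] [AddCommGroup V]
    [Module K V] [Finite V] {B : LinearMap.BilinForm K V} (hB : B.Nondegenerate)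
    (W : Submodule K V) :
    Nat.card W * Nat.card (B.orthogonal W) = Nat.card V := by
  have : Module.Finite K V := Module.Finite.of_finite
  rw [Module.natCard_eq_pow_finrank (K := K) (V := W),
    Module.natCard_eq_pow_finrank (K := K) (V := B.orthogonal W),
    Module.natCard_eq_pow_finrank (K := K) (V := V), ← pow_add, finrank_orthogonal hB,
    Nat.add_sub_cancel' (Submodule.finrank_le W)]

end LinearMap.BilinForm

theorem Submodule.card_eq_card_map_mul_card_ker {R M N : Type*} [Ring R] [AddCommGroup M]
    [Module R M] [AddCommGroup N] [Module R N] (f : M →ₗ[R] N) (p : Submodule R M) :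
    Nat.card p = Nat.card (p.map f) * Nat.card (LinearMap.ker (f.domRestrict p)) := by
  rw [Submodule.card_eq_card_quotient_mul_card (LinearMap.ker (f.domRestrict p)), mul_comm,
    Nat.card_congr (f.domRestrict p).quotKerEquivRange.toEquiv, LinearMap.range_domRestrict]

namespace Ering

variable {n : ℕ}

instance : Module (ZMod 2) Ering := inferInstanceAs (Module (ZMod 2) ((ZMod 2) × (ZMod 2)))

theorem fst_add (a b : Ering) : (a + b).1 = a.1 + b.1 := rfl

theorem snd_add (a b : Ering) : (a + b).2 = a.2 + b.2 := rfl

theorem fst_mul (a b : Ering) : (a * b).1 = a.1 * b.1 := rfl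

theorem snd_mul (a b : Ering) : (a * b).2 = a.2 * b.1 := rfl

theorem fst_sum {ι : Type*} (s : Finset ι) (g : ι → Ering) :
    (∑ i ∈ s, g i).1 = ∑ i ∈ s, (g i).1 :=
  Prod.fst_sum

theorem snd_sum {ι : Type*} (s : Finset ι) (g : ι → Ering) :
    (∑ i ∈ s, g i).2 = ∑ i ∈ s, (g i).2 :=
  Prod.snd_sum

theorem fsmul_add : ∀ (a b : ZMod 2) (e : Ering), fsmul (a + b) e = fsmul a e + fsmul b e := by
  decide

theorem fsmul_mul : ∀ (a b : ZMod 2) (e : Ering), fsmul (a * b) e = a • fsmul b e := by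
  decide

theorem fst_fsmul_zeta : ∀ u : ZMod 2, (fsmul u zeta).1 = 0 := by decide

theorem snd_fsmul_zeta : ∀ u : ZMod 2, (fsmul u zeta).2 = u := by decide

theorem fsmul_fst_zeta : ∀ e : Ering, fsmul e.1 zeta = zeta * e := by decide

theorem fsmul_snd_zeta : ∀ e : Ering, fsmul e.2 zeta = e + kappa * e := by decide

theorem fsmul_snd_zeta_of_fst_eq_zero : ∀ e : Ering, e.1 = 0 → fsmul e.2 zeta = e := by decide

theorem sympF_comm (x y : VF n) : sympF x y = sympF y x := by
  simp only [sympF, mul_comm, add_comm]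

def sympFBilin : LinearMap.BilinForm (ZMod 2) (VF n) :=
  LinearMap.mk₂ (ZMod 2) sympF
    (fun x y z => by simp only [sympF, Prod.fst_add, Prod.snd_add, Pi.add_apply, add_mul,
      Finset.sum_add_distrib]; ring)
    (fun c x y => by simp [sympF, Finset.mul_sum, mul_add, mul_assoc])
    (fun x y z => by simp only [sympF, Prod.fst_add, Prod.snd_add, Pi.add_apply, mul_add,
      Finset.sum_add_distrib]; ring)
    (fun c x y => by simp [sympF, Finset.mul_sum, mul_add, mul_left_comm])

theorem sympFBilin_apply (x y : VF n) : sympFBilin x y = sympF x y := rfl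

theorem sympFBilin_nondegenerate : (sympFBilin (n := n)).Nondegenerate := by
  refine (LinearMap.IsRefl.nondegenerate_iff_separatingLeft fun x y h => ?_).2 fun z hz => ?_
  · rwa [sympFBilin_apply, sympF_comm] at h
  refine Prod.ext (funext fun i => ?_) (funext fun i => ?_)
  · simpa [sympFBilin_apply, sympF, Pi.single_apply] using hz (0, Pi.single i 1)
  · simpa [sympFBilin_apply, sympF, Pi.single_apply] using hz (Pi.single i 1, 0)

theorem dualF_eq_orthogonal (D : Submodule (ZMod 2) (VF n)) :
    dualF (D : Set (VF n)) = sympFBilin.orthogonal D := by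
  ext z
  simp only [dualF, Set.mem_ofPred_eq, SetLike.mem_coe, LinearMap.BilinForm.mem_orthogonal_iff,
    sympFBilin_apply, sympF_comm _ z]

theorem card_mul_card_dualF (D : Submodule (ZMod 2) (VF n)) :
    Nat.card (D : Set (VF n)) * Nat.card (dualF (D : Set (VF n))) = 4 ^ n := by
  rw [dualF_eq_orthogonal]
  refine (LinearMap.BilinForm.card_mul_card_orthogonal sympFBilin_nondegenerate D).trans ?_
  simp [← mul_pow]

def sigVec (x : VE n) : VF n := (fun i => (x.1 i).2, fun i => (x.2 i).2)

theorem fst_sympE (z w : VE n) : (sympE z w).1 = sympF (resVec z) (resVec w) := by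
  simp only [sympE, sympF, fst_add, fst_sum, fst_mul, resVec]

theorem snd_sympE (z w : VE n) : (sympE z w).2 = sympF (sigVec z) (resVec w) := by
  simp only [sympE, sympF, snd_add, snd_sum, snd_mul, sigVec, resVec]

theorem resVec_evec_zeta (v : VF n) : resVec (evec zeta v) = 0 := by
  ext i <;> exact fst_fsmul_zeta _

theorem sigVec_evec_zeta (v : VF n) : sigVec (evec zeta v) = v := by
  ext i <;> exact snd_fsmul_zeta _

theorem evec_zeta_resVec (x : VE n) :
    evec zeta (resVec x) = (fun i => zeta * x.1 i, fun i => zeta * x.2 i) := by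
  ext i <;> exact fsmul_fst_zeta _

theorem evec_zeta_sigVec (x : VE n) :
    evec zeta (sigVec x) = x + (fun i => kappa * x.1 i, fun i => kappa * x.2 i) := by
  ext i <;> exact fsmul_snd_zeta _

theorem evec_zeta_sigVec_of_resVec_eq_zero {x : VE n} (hx : resVec x = 0) :
    evec zeta (sigVec x) = x := by
  ext i
  · exact fsmul_snd_zeta_of_fst_eq_zero _ (congrFun (congrArg Prod.fst hx) i)
  · exact fsmul_snd_zeta_of_fst_eq_zero _ (congrFun (congrArg Prod.snd hx) i)

variable {C : Set (VE n)}

theorem resVec_mem_torCode (hC : IsLinearCode C) {w : VE n} (hw : w ∈ C) :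
    resVec w ∈ torCode C := by
  simpa only [torCode, Set.mem_ofPred_eq, evec_zeta_resVec] using hC.2.2 zeta w hw

theorem sigVec_mem_torCode (hC : IsLinearCode C) {w : VE n} (hw : w ∈ C) :
    sigVec w ∈ torCode C := by
  simpa only [torCode, Set.mem_ofPred_eq, evec_zeta_sigVec] using
    hC.2.1 w hw _ (hC.2.2 kappa w hw)

theorem mem_dual_iff (hC : IsLinearCode C) (z : VE n) :
    z ∈ dual C ↔ resVec z ∈ dualF (torCode C) ∧ sigVec z ∈ dualF (resCode C) := by
  have eq_zero_iff (e : Ering) : e = 0 ↔ e.1 = 0 ∧ e.2 = 0 := Prod.ext_iff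
  constructor
  · rintro ⟨hl, hr⟩
    refine ⟨fun v hv => ?_, ?_⟩
    · simpa [snd_sympE, sigVec_evec_zeta, sympF_comm v] using ((eq_zero_iff _).1 (hr _ hv)).2
    · rintro _ ⟨w, hw, rfl⟩
      simpa [snd_sympE] using ((eq_zero_iff _).1 (hl w hw)).2
  · rintro ⟨hres, hsig⟩
    refine ⟨fun w hw => ?_, fun w hw => ?_⟩ <;>
      simp only [eq_zero_iff, fst_sympE, snd_sympE, sympF_comm _ (resVec z)]
    · exact ⟨hres _ (resVec_mem_torCode hC hw), hsig _ ⟨w, hw, rfl⟩⟩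
    · exact ⟨hres _ (resVec_mem_torCode hC hw), hres _ (sigVec_mem_torCode hC hw)⟩

def dualEquivProd (hC : IsLinearCode C) : dual C ≃ dualF (torCode C) × dualF (resCode C) where
  toFun z :=
    (⟨resVec z, ((mem_dual_iff hC z).1 z.2).1⟩, ⟨sigVec z, ((mem_dual_iff hC z).1 z.2).2⟩)
  invFun p := ⟨(fun i => (p.1.1.1 i, p.2.1.1 i), fun i => (p.1.1.2 i, p.2.1.2 i)),
    (mem_dual_iff hC _).2 ⟨p.1.2, p.2.2⟩⟩
  left_inv _ := rfl
  right_inv _ := rfl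

theorem card_dual (hC : IsLinearCode C) :
    Nat.card (dual C) = Nat.card (dualF (torCode C)) * Nat.card (dualF (resCode C)) := by
  rw [Nat.card_congr (dualEquivProd hC), Nat.card_prod]

def resLinear : VE n →ₗ[ZMod 2] VF n where
  toFun := resVec
  map_add' _ _ := rfl
  map_smul' _ _ := rfl

def zetaLinear : VF n →ₗ[ZMod 2] VE n where
  toFun := evec zeta
  map_add' _ _ := by ext i <;> exact fsmul_add _ _ _
  map_smul' _ _ := by ext i <;> exact fsmul_mul _ _ _

def IsLinearCode.toSubmodule (hC : IsLinearCode C) : Submodule (ZMod 2) (VE n) where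
  carrier := C
  zero_mem' := hC.1
  add_mem' hx hy := hC.2.1 _ hx _ hy
  smul_mem' c x hx := by
    obtain rfl | rfl : c = 0 ∨ c = 1 := by decide +revert
    · simpa only [zero_smul] using hC.1
    · simpa only [one_smul] using hx

theorem resCode_eq_map (hC : IsLinearCode C) : resCode C = hC.toSubmodule.map resLinear := rfl

theorem torCode_eq_comap (hC : IsLinearCode C) :
    torCode C = hC.toSubmodule.comap zetaLinear := rfl

def kerResLinearEquivTorCode (hC : IsLinearCode C) :
    LinearMap.ker (resLinear.domRestrict hC.toSubmodule) ≃ torCode C where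
  toFun x := ⟨sigVec x, show evec zeta (sigVec x.1.1) ∈ C from
    (evec_zeta_sigVec_of_resVec_eq_zero (x := x.1.1) x.2).symm ▸ x.1.2⟩
  invFun v := ⟨⟨evec zeta v, v.2⟩, resVec_evec_zeta v.1⟩
  left_inv x := Subtype.ext (Subtype.ext (evec_zeta_sigVec_of_resVec_eq_zero (x := x.1.1) x.2))
  right_inv v := Subtype.ext (sigVec_evec_zeta v.1)

theorem card_eq_card_resCode_mul_card_torCode (hC : IsLinearCode C) :
    Nat.card C = Nat.card (resCode C) * Nat.card (torCode C) := by
  rw [← Nat.card_congr (kerResLinearEquivTorCode hC)]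
  exact Submodule.card_eq_card_map_mul_card_ker resLinear hC.toSubmodule

end Ering

open Ering
/-- every `E`-linear code is two-sided symplectic nice:
`|C|·|C^{⊥_S}| = 4^{2n}`. -/
theorem Ering.two_sided_nice {n : ℕ} (C : Set (VE n)) (hC : IsLinearCode C) :
    Nat.card ↥C * Nat.card ↥(dual C) = 4 ^ (2 * n) := by
  calc Nat.card C * Nat.card (dual C)
      = (Nat.card (resCode C) * Nat.card (dualF (resCode C))) *
          (Nat.card (torCode C) * Nat.card (dualF (torCode C))) := by
        rw [card_eq_card_resCode_mul_card_torCode hC, card_dual hC]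
        ring
    _ = 4 ^ n * 4 ^ n := by
        rw [resCode_eq_map hC, torCode_eq_comap hC, card_mul_card_dualF, card_mul_card_dualF]
    _ = 4 ^ (2 * n) := by rw [two_mul, pow_add]
end
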